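/- Let k > 0 and α ∈ ℝ² with |αₙ| ≠ k for all n ∈ ℤ², and let (Ẽₙ)_{n∈ℤ²} ⊂ ℂ³ be tangential vectors (e₃·Ẽₙ = 0) with Σₙ (1+|αₙ|²)^{−1/2}(|Ẽₙ|² + |αₙ·Ẽₙ|²) < ∞. Then the imaginary part of the pairing ⟨RẼ,Ẽ⟩ := 4π² Σ_{n∈ℤ²} R̂ₙ · conj(Ẽₙ), with R̂ₙ = −(1/(iβₙ))[k²Ẽₙ − (αₙ·Ẽₙ)αₙ], satisfies Im ⟨RẼ,Ẽ⟩ = 4π² Σ_{n∈P} (1/βₙ) [ k²|Ẽₙ|² − |αₙ·Ẽₙ|² ] ≥ 0, i.e. each term of this (finite) sum is nonnegative since |αₙ·Ẽₙ| ≤ |αₙ||Ẽₙ| < k|Ẽₙ| for n ∈ P. -/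

import Mathlib

/-!
Since `αₙ` is real, `R̂ₙ · conj Ẽₙ = (i / βₙ) (k²|Ẽₙ|² − |αₙ·Ẽₙ|²)` with a real bracket. The factor
`i / βₙ` is real on the evanescent modes and purely imaginary on the finitely many propagating
ones, so only `P` contributes to the imaginary part, and there the bracket is nonnegative by
Cauchy–Schwarz. Passing `Im` through the series needs its convergence: once
`|αₙ|² ≥ 2k² + 1` we have `1 / |βₙ| ≤ √2 (1 + |αₙ|²)^{-1/2}`, so the weighted summability
hypothesis dominates the terms.
-/

open scoped Real

/-- `|αₙ|` for `αₙ = (α₁+n₁, α₂+n₂, 0)`. -/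
noncomputable def alphaNorm (α : ℝ × ℝ) (n : ℤ × ℤ) : ℝ :=
  Real.sqrt ((α.1 + (n.1 : ℝ))^2 + (α.2 + (n.2 : ℝ))^2)

/-- The vector `αₙ = (α₁+n₁, α₂+n₂, 0)` viewed in `ℂ³`. -/
noncomputable def alphaVec (α : ℝ × ℝ) (n : ℤ × ℤ) : Fin 3 → ℂ :=
  ![((α.1 + (n.1 : ℝ) : ℝ) : ℂ), ((α.2 + (n.2 : ℝ) : ℝ) : ℂ), 0]

/-- The vertical wavenumbers `βₙ` of the Rayleigh expansion:
`βₙ = (k² − |αₙ|²)^{1/2}` if `|αₙ| < k` and `βₙ = i(|αₙ|² − k²)^{1/2}` if `|αₙ| > k`. -/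
noncomputable def betaN (k : ℝ) (α : ℝ × ℝ) (n : ℤ × ℤ) : ℂ :=
  if alphaNorm α n < k then (Real.sqrt (k^2 - (alphaNorm α n)^2) : ℂ)
  else Complex.I * (Real.sqrt ((alphaNorm α n)^2 - k^2) : ℂ)

/-- Bilinear dot product on `ℂ³` (no conjugation). -/
def cdot (a b : Fin 3 → ℂ) : ℂ := a 0 * b 0 + a 1 * b 1 + a 2 * b 2

/-- Hermitian pairing `a · conj b` on `ℂ³`. -/
noncomputable def hpair (a b : Fin 3 → ℂ) : ℂ := ∑ j : Fin 3, a j * (starRingEnd ℂ) (b j)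

/-- Squared Euclidean norm `|v|² = Σⱼ|vⱼ|²` of `v ∈ ℂ³`. -/
noncomputable def enormSq (v : Fin 3 → ℂ) : ℝ := ∑ j : Fin 3, ‖v j‖^2

/-- The Fourier symbol `R̂ₙ = −(1/(iβₙ))[k²Ẽₙ − (αₙ·Ẽₙ)αₙ]` of the transparent
boundary (Dirichlet-to-Neumann) operator `R`. -/
noncomputable def Rsymb (k : ℝ) (α : ℝ × ℝ) (n : ℤ × ℤ) (En : Fin 3 → ℂ) : Fin 3 → ℂ :=
  fun j => -(1 / (Complex.I * betaN k α n)) *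
    ((k : ℂ)^2 * En j - cdot (alphaVec α n) En * alphaVec α n j)

/-- The Sobolev weight `(1+|αₙ|²)^{−1/2}`. -/
noncomputable def sw (α : ℝ × ℝ) (n : ℤ × ℤ) : ℝ := 1 / Real.sqrt (1 + (alphaNorm α n)^2)

open Complex

noncomputable def dtnForm (k : ℝ) (α : ℝ × ℝ) (n : ℤ × ℤ) (E : Fin 3 → ℂ) : ℝ :=
  k ^ 2 * enormSq E - ‖cdot (alphaVec α n) E‖ ^ 2

lemma enormSq_nonneg (v : Fin 3 → ℂ) : 0 ≤ enormSq v :=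
  Finset.sum_nonneg fun _ _ => sq_nonneg _

lemma norm_cdot_sq_le (a b : Fin 3 → ℂ) : ‖cdot a b‖ ^ 2 ≤ enormSq a * enormSq b := by
  have h : ‖cdot a b‖ ≤ ∑ j, ‖a j‖ * ‖b j‖ := by
    simpa only [cdot, Fin.sum_univ_three, norm_mul] using
      norm_sum_le Finset.univ fun j => a j * b j
  calc ‖cdot a b‖ ^ 2 ≤ (∑ j, ‖a j‖ * ‖b j‖) ^ 2 := pow_le_pow_left₀ (norm_nonneg _) h 2
    _ ≤ enormSq a * enormSq b := Finset.sum_mul_sq_le_sq_mul_sq _ _ _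

lemma alphaNorm_sq (α : ℝ × ℝ) (n : ℤ × ℤ) :
    alphaNorm α n ^ 2 = (α.1 + n.1) ^ 2 + (α.2 + n.2) ^ 2 :=
  Real.sq_sqrt (by positivity)

lemma enormSq_alphaVec (α : ℝ × ℝ) (n : ℤ × ℤ) :
    enormSq (alphaVec α n) = alphaNorm α n ^ 2 := by
  rw [alphaNorm_sq]
  simp only [enormSq, alphaVec, Fin.sum_univ_three, Matrix.cons_val_zero, Matrix.cons_val_one,
    Matrix.cons_val_two, Matrix.head_cons, Matrix.tail_cons, norm_real, Real.norm_eq_abs, sq_abs,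
    norm_zero]
  ring

lemma alphaNorm_nonneg (α : ℝ × ℝ) (n : ℤ × ℤ) : 0 ≤ alphaNorm α n := Real.sqrt_nonneg _

lemma dtnForm_nonneg {k : ℝ} {α : ℝ × ℝ} {n : ℤ × ℤ} (h : alphaNorm α n < k)
    (E : Fin 3 → ℂ) : 0 ≤ dtnForm k α n E := by
  have hαk : alphaNorm α n ^ 2 ≤ k ^ 2 := pow_le_pow_left₀ (alphaNorm_nonneg α n) h.le 2
  have hcs := norm_cdot_sq_le (alphaVec α n) E
  rw [enormSq_alphaVec] at hcs
  rw [dtnForm]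
  nlinarith [mul_le_mul_of_nonneg_right hαk (enormSq_nonneg E)]

lemma abs_dtnForm_le (k : ℝ) (α : ℝ × ℝ) (n : ℤ × ℤ) (E : Fin 3 → ℂ) :
    |dtnForm k α n E| ≤ (k ^ 2 + 1) * (enormSq E + ‖cdot (alphaVec α n) E‖ ^ 2) := by
  have := enormSq_nonneg E
  rw [dtnForm, abs_le]
  constructor <;> nlinarith [sq_nonneg k, sq_nonneg ‖cdot (alphaVec α n) E‖]

lemma hpair_Rsymb (k : ℝ) (α : ℝ × ℝ) (n : ℤ × ℤ) (E : Fin 3 → ℂ) :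
    hpair (Rsymb k α n E) E = I / betaN k α n * dtnForm k α n E := by
  set a := alphaVec α n
  have ha : ∀ j, (starRingEnd ℂ) (a j) = a j := by
    intro j; fin_cases j <;> simp [a, alphaVec, conj_ofReal]
  have hcE : ∑ j, a j * (starRingEnd ℂ) (E j) = (starRingEnd ℂ) (cdot a E) := by
    simp only [cdot, Fin.sum_univ_three, map_add, map_mul, ha]
  have hEE : ∑ j, E j * (starRingEnd ℂ) (E j) = (enormSq E : ℂ) := by
    simp only [enormSq, ofReal_sum, ofReal_pow, mul_conj, normSq_eq_norm_sq]
  have hI : -(1 / (I * betaN k α n)) = I / betaN k α n := by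
    rw [one_div, mul_inv, inv_I]; ring
  calc hpair (Rsymb k α n E) E
      = -(1 / (I * betaN k α n)) * ((k : ℂ) ^ 2 * ∑ j, E j * (starRingEnd ℂ) (E j)
          - cdot a E * ∑ j, a j * (starRingEnd ℂ) (E j)) := by
        simp only [hpair, Rsymb, Fin.sum_univ_three]; ring
    _ = _ := by rw [hI, hcE, hEE, mul_conj, normSq_eq_norm_sq, dtnForm]; push_cast; ring

lemma I_div_betaN_of_lt {k : ℝ} {α : ℝ × ℝ} {n : ℤ × ℤ} (h : alphaNorm α n < k) :
    I / betaN k α n = I * ((1 / √(k ^ 2 - alphaNorm α n ^ 2) : ℝ) : ℂ) := by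
  rw [betaN, if_pos h]; push_cast; ring

lemma I_div_betaN_of_not_lt {k : ℝ} {α : ℝ × ℝ} {n : ℤ × ℤ} (h : ¬ alphaNorm α n < k) :
    I / betaN k α n = ((1 / √(alphaNorm α n ^ 2 - k ^ 2) : ℝ) : ℂ) := by
  rw [betaN, if_neg h, div_mul_cancel_left₀ I_ne_zero]; push_cast; ring

lemma one_div_sqrt_sub_le_sqrt_two_mul_sw {k : ℝ} {α : ℝ × ℝ} {n : ℤ × ℤ}
    (h : 2 * k ^ 2 + 1 ≤ alphaNorm α n ^ 2) :
    1 / √(alphaNorm α n ^ 2 - k ^ 2) ≤ √2 * sw α n := by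
  have hpos : 0 < √(alphaNorm α n ^ 2 - k ^ 2) := Real.sqrt_pos.2 (by nlinarith)
  rw [sw, mul_one_div, div_le_div_iff₀ hpos (by positivity), one_mul,
    ← Real.sqrt_mul zero_le_two]
  exact Real.sqrt_le_sqrt (by nlinarith)

lemma norm_hpair_Rsymb_le {k : ℝ} {α : ℝ × ℝ} {n : ℤ × ℤ}
    (h : 2 * k ^ 2 + 1 ≤ alphaNorm α n ^ 2) (E : Fin 3 → ℂ) :
    ‖hpair (Rsymb k α n E) E‖
      ≤ √2 * (k ^ 2 + 1) * (sw α n * (enormSq E + ‖cdot (alphaVec α n) E‖ ^ 2)) := by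
  have hev : ¬ alphaNorm α n < k := fun hlt => by
    nlinarith [pow_le_pow_left₀ (alphaNorm_nonneg α n) hlt.le 2]
  rw [hpair_Rsymb, I_div_betaN_of_not_lt hev, ← ofReal_mul, norm_real, Real.norm_eq_abs,
    abs_mul, abs_of_nonneg (by positivity : (0 : ℝ) ≤ 1 / √(alphaNorm α n ^ 2 - k ^ 2))]
  calc 1 / √(alphaNorm α n ^ 2 - k ^ 2) * |dtnForm k α n E|
      ≤ (√2 * sw α n) * ((k ^ 2 + 1) * (enormSq E + ‖cdot (alphaVec α n) E‖ ^ 2)) :=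
        mul_le_mul (one_div_sqrt_sub_le_sqrt_two_mul_sw h) (abs_dtnForm_le k α n E)
          (abs_nonneg _) (by unfold sw; positivity)
    _ = _ := by ring

lemma finite_setOf_abs_add_intCast_le (a R : ℝ) : {m : ℤ | |a + m| ≤ R}.Finite :=
  (Set.finite_Icc ⌈-a - R⌉ ⌊R - a⌋).subset fun m (hm : |a + m| ≤ R) => by
    obtain ⟨hlo, hhi⟩ := abs_le.1 hm
    exact ⟨Int.ceil_le.2 (by linarith), Int.le_floor.2 (by linarith)⟩

lemma finite_setOf_alphaNorm_sq_lt (α : ℝ × ℝ) (c : ℝ) :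
    {n : ℤ × ℤ | alphaNorm α n ^ 2 < c}.Finite := by
  refine ((finite_setOf_abs_add_intCast_le α.1 √c).prod
    (finite_setOf_abs_add_intCast_le α.2 √c)).subset fun n hn => ?_
  replace hn : (α.1 + n.1) ^ 2 + (α.2 + n.2) ^ 2 < c := alphaNorm_sq α n ▸ hn
  exact ⟨Real.abs_le_sqrt (by nlinarith), Real.abs_le_sqrt (by nlinarith)⟩

lemma summable_hpair_Rsymb (k : ℝ) {α : ℝ × ℝ} {Et : ℤ × ℤ → Fin 3 → ℂ}
    (hsum : Summable fun n : ℤ × ℤ =>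
      sw α n * (enormSq (Et n) + ‖cdot (alphaVec α n) (Et n)‖ ^ 2)) :
    Summable fun n : ℤ × ℤ => hpair (Rsymb k α n (Et n)) (Et n) := by
  refine (hsum.mul_left (√2 * (k ^ 2 + 1))).of_norm_bounded_eventually ?_
  refine (finite_setOf_alphaNorm_sq_lt α (2 * k ^ 2 + 1)).subset fun n hn => ?_
  by_contra hfar
  exact hn (norm_hpair_Rsymb_le (not_lt.1 hfar) (Et n))

lemma im_tsum_hpair_Rsymb (k : ℝ) {α : ℝ × ℝ} {Et : ℤ × ℤ → Fin 3 → ℂ}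
    (hsum : Summable fun n : ℤ × ℤ =>
      sw α n * (enormSq (Et n) + ‖cdot (alphaVec α n) (Et n)‖ ^ 2)) :
    (∑' n : ℤ × ℤ, hpair (Rsymb k α n (Et n)) (Et n)).im
      = ∑' n : {n : ℤ × ℤ // alphaNorm α n < k},
          1 / √(k ^ 2 - alphaNorm α n.1 ^ 2) * dtnForm k α n.1 (Et n.1) := by
  rw [im_tsum (summable_hpair_Rsymb k hsum)]
  refine (tsum_congr fun n => ?_).trans (tsum_subtype {n | alphaNorm α n < k}
    fun n => 1 / √(k ^ 2 - alphaNorm α n ^ 2) * dtnForm k α n (Et n)).symm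
  by_cases h : alphaNorm α n < k
  · simp [hpair_Rsymb, I_div_betaN_of_lt h, h]
  · simp [hpair_Rsymb, I_div_betaN_of_not_lt h, h]

theorem im_pairing_formula_nonneg_general (k : ℝ) (α : ℝ × ℝ)
    (Et : ℤ × ℤ → Fin 3 → ℂ)
    (hsum : Summable fun n : ℤ × ℤ =>
      sw α n * (enormSq (Et n) + ‖cdot (alphaVec α n) (Et n)‖^2)) :
    (((4 * (π : ℂ)^2) * ∑' n : ℤ × ℤ, hpair (Rsymb k α n (Et n)) (Et n)).im
      = 4 * π^2 * ∑' n : {n : ℤ × ℤ // alphaNorm α n < k},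
          (1 / Real.sqrt (k^2 - (alphaNorm α n.1)^2)) *
            (k^2 * enormSq (Et n.1) - ‖cdot (alphaVec α n.1) (Et n.1)‖^2)) ∧
    (0 ≤ ((4 * (π : ℂ)^2) * ∑' n : ℤ × ℤ, hpair (Rsymb k α n (Et n)) (Et n)).im) ∧
    (∀ n : ℤ × ℤ, alphaNorm α n < k →
      0 ≤ (1 / Real.sqrt (k^2 - (alphaNorm α n)^2)) *
            (k^2 * enormSq (Et n) - ‖cdot (alphaVec α n) (Et n)‖^2)) := by
  have hterm (n : ℤ × ℤ) (h : alphaNorm α n < k) :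
      0 ≤ 1 / √(k ^ 2 - alphaNorm α n ^ 2) * dtnForm k α n (Et n) :=
    mul_nonneg (by positivity) (dtnForm_nonneg h _)
  have him : ((4 * (π : ℂ) ^ 2) * ∑' n : ℤ × ℤ, hpair (Rsymb k α n (Et n)) (Et n)).im
      = 4 * π ^ 2 * ∑' n : {n : ℤ × ℤ // alphaNorm α n < k},
          1 / √(k ^ 2 - alphaNorm α n.1 ^ 2) * dtnForm k α n.1 (Et n.1) := by
    rw [show (4 * (π : ℂ) ^ 2) = ((4 * π ^ 2 : ℝ) : ℂ) by push_cast; rfl, im_ofReal_mul,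
      im_tsum_hpair_Rsymb k hsum]
  exact ⟨him, him ▸ mul_nonneg (by positivity) (tsum_nonneg fun n => hterm n.1 n.2), hterm⟩

/-- The imaginary part of the D-to-N pairing `⟨RẼ,Ẽ⟩ = 4π² Σₙ R̂ₙ·conj(Ẽₙ)` satisfies
`Im⟨RẼ,Ẽ⟩ = 4π² Σ_{n∈P} (1/βₙ)[k²|Ẽₙ|² − |αₙ·Ẽₙ|²] ≥ 0`, each term of this (finite)
sum over the propagating modes `P = {|αₙ| < k}` (where `βₙ = (k²−|αₙ|²)^{1/2} > 0`)
being nonnegative. -/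
theorem im_pairing_formula_nonneg (k : ℝ) (hk : 0 < k) (α : ℝ × ℝ)
    (hwood : ∀ n : ℤ × ℤ, alphaNorm α n ≠ k)
    (Et : ℤ × ℤ → Fin 3 → ℂ) (htan : ∀ n, Et n 2 = 0)
    (hsum : Summable fun n : ℤ × ℤ =>
      sw α n * (enormSq (Et n) + ‖cdot (alphaVec α n) (Et n)‖^2)) :
    (((4 * (π : ℂ)^2) * ∑' n : ℤ × ℤ, hpair (Rsymb k α n (Et n)) (Et n)).im
      = 4 * π^2 * ∑' n : {n : ℤ × ℤ // alphaNorm α n < k},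
          (1 / Real.sqrt (k^2 - (alphaNorm α n.1)^2)) *
            (k^2 * enormSq (Et n.1) - ‖cdot (alphaVec α n.1) (Et n.1)‖^2)) ∧
    (0 ≤ ((4 * (π : ℂ)^2) * ∑' n : ℤ × ℤ, hpair (Rsymb k α n (Et n)) (Et n)).im) ∧
    (∀ n : ℤ × ℤ, alphaNorm α n < k →
      0 ≤ (1 / Real.sqrt (k^2 - (alphaNorm α n)^2)) *
            (k^2 * enormSq (Et n) - ‖cdot (alphaVec α n) (Et n)‖^2)) :=
  im_pairing_formula_nonneg_general k α Et hsum
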